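/- arXiv:1910.06495 — 2 statements merged into one kernel-verified Lean document; each statement's English description precedes it below -/
import Mathlib

section
/- The function f is strictly decreasing on (0, ∞). -/
/-! With `c = α + β`, the function is `(β - α) / c + (2 * α / c ^ 2) * φ t / t` where
`φ t = 1 - exp (-(t * c))`. Since `φ` is strictly concave and `φ 0 = 0`, the quotient `φ t / t` is
the slope of the chord of `φ` from the origin to `t`, which strictly decreases in `t`. -/

open Real Set

theorem StrictConcaveOn.strictAntiOn_div {𝕜 : Type*} [Field 𝕜] [LinearOrder 𝕜]
    [IsStrictOrderedRing 𝕜] {s : Set 𝕜} {f : 𝕜 → 𝕜} (hf : StrictConcaveOn 𝕜 s f) (h0 : 0 ∈ s)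
    (hf0 : f 0 = 0) : StrictAntiOn (fun x => f x / x) (s ∩ Ioi 0) := by
  rintro x ⟨hxs, hx⟩ y ⟨hys, hy⟩ hxy
  simpa [hf0] using hf.secant_strict_mono h0 hxs hys hx.ne' hy.ne' hxy

theorem strictConcaveOn_one_sub_exp_neg_mul {c : ℝ} (hc : c ≠ 0) :
    StrictConcaveOn ℝ univ fun t => 1 - exp (-(t * c)) := by
  refine ⟨convex_univ, fun x _ y _ hxy a b ha hb hab => ?_⟩
  have hconv := strictConvexOn_exp.2 (mem_univ (-(x * c))) (mem_univ (-(y * c)))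
    (by simpa [hc] using hxy) ha hb hab
  have hcomb : -((a * x + b * y) * c) = a * -(x * c) + b * -(y * c) := by ring
  simp only [smul_eq_mul] at hconv ⊢
  rw [hcomb]
  linarith

/-- the correlation coefficient function
`f(t) = (β − α)/(α + β) + 2α(1 − e^{−t(α+β)})/(t(α+β)²)` of the two-dimensional exponentially
alternating Brownian motion (started synchronized) is strictly decreasing on `(0, ∞)`. -/
theorem stmt13 (α β : ℝ) (hα : 0 < α) (hβ : 0 < β) :
    StrictAntiOn
      (fun t : ℝ =>
        (β - α) / (α + β) + 2 * α * (1 - Real.exp (-(t * (α + β)))) / (t * (α + β) ^ 2))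
      (Set.Ioi (0 : ℝ)) := by
  have hc : 0 < α + β := add_pos hα hβ
  have hslope := (strictConcaveOn_one_sub_exp_neg_mul hc.ne').strictAntiOn_div (mem_univ 0)
    (by simp)
  have hform : ∀ t : ℝ, 2 * α * (1 - exp (-(t * (α + β)))) / (t * (α + β) ^ 2) =
      2 * α / (α + β) ^ 2 * ((1 - exp (-(t * (α + β)))) / t) := fun t => by
    rw [div_mul_div_comm, mul_comm ((α + β) ^ 2)]
  intro s hs t ht hst
  simp only [hform]
  gcongr ?_ + 2 * α / (α + β) ^ 2 * ?_
  exact hslope ⟨mem_univ s, hs⟩ ⟨mem_univ t, ht⟩ hst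
end

section
/- Almost surely, for every k ≥ 1, Σ_{i=1}^{k} (−1)^{Z_{i−1}} (F_λ(χ_i) − F_λ(χ_{i−1})) = B*(θ_k). -/
/-! The identity is pathwise once the exponential times are nonnegative, which holds almost
surely. On `[χ i, χ (i+1)]` the flip-flop goes down by `C_i − M_i` and back up by
`C_{i+1} − M_i`, so its increment is `C_{i+1} − C_i = B(θ_{i+1}) − B(θ_i)`; and since `θ` is
nondecreasing, the series defining `B*(θ_k)` stops after its first `k` terms, which are the
same signed Brownian increments. -/

open MeasureTheory ProbabilityTheory Real Filter Set

noncomputable section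

def IsStdBM {Ω : Type*} [MeasurableSpace Ω] (P : Measure Ω) (B : ℝ → Ω → ℝ) : Prop :=
  (∀ t, Measurable (B t)) ∧
  (∀ ω, B 0 ω = 0) ∧
  (∀ ω, Continuous fun t => B t ω) ∧
  (∀ (n : ℕ) (t : ℕ → ℝ), (∀ i, 0 ≤ t i) → Monotone t →
    iIndepFun
      (fun i : Fin n => fun ω => B (t (i.val + 1)) ω - B (t i.val) ω) P) ∧
  (∀ s t : ℝ, 0 ≤ s → s ≤ t →
    P.map (fun ω => B t ω - B s ω) = gaussianReal 0 (t - s).toNNReal)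

lemma ae_nonneg_gammaMeasure (a r : ℝ) : ∀ᵐ x ∂gammaMeasure a r, 0 ≤ x := by
  have hneg : {x : ℝ | ¬0 ≤ x} = Iio 0 := by ext; simp
  rw [ae_iff, hneg, gammaMeasure, withDensity_apply _ measurableSet_Iio]
  exact lintegral_gammaPDF_of_nonpos le_rfl

lemma ae_nonneg_of_map_eq_gammaMeasure {Ω : Type*} [MeasurableSpace Ω] {P : Measure Ω}
    {X : Ω → ℝ} (hX : AEMeasurable X P) {a r : ℝ} (hmap : P.map X = gammaMeasure a r) :
    ∀ᵐ ω ∂P, 0 ≤ X ω :=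
  (ae_map_iff hX measurableSet_Ici).1 (hmap ▸ ae_nonneg_gammaMeasure a r)

lemma monotone_sum_range_of_nonneg {f : ℕ → ℝ} (hf : ∀ i, 0 ≤ f i) :
    Monotone fun k => ∑ i ∈ Finset.range k, f i :=
  monotone_nat_of_le_succ fun k => by
    rw [Finset.sum_range_succ]
    exact le_add_of_nonneg_right (hf k)

lemma sInf_image_Icc_le {f : ℝ → ℝ} (hf : Continuous f) {a b x : ℝ} (hx : x ∈ Icc a b) :
    sInf (f '' Icc a b) ≤ f x :=
  csInf_le (isCompact_Icc.image hf).bddBelow (mem_image_of_mem f hx)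

lemma sub_eq_of_down_up {F : ℝ → ℝ} {c u v m x₀ x₁ x₂ : ℝ} (hc : 0 < c)
    (hmu : m ≤ u) (hmv : m ≤ v) (hx₁ : x₁ = x₀ + c⁻¹ * (u - m)) (hx₂ : x₂ = x₁ + c⁻¹ * (v - m))
    (hdown : ∀ t ∈ Icc x₀ x₁, F t = F x₀ - c * (t - x₀))
    (hup : ∀ t ∈ Icc x₁ x₂, F t = F x₁ + c * (t - x₁)) :
    F x₂ - F x₀ = v - u := by
  have hx₀₁ : x₀ ≤ x₁ := hx₁ ▸ le_add_of_nonneg_right (mul_nonneg (by positivity) (sub_nonneg.2 hmu))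
  have hx₁₂ : x₁ ≤ x₂ := hx₂ ▸ le_add_of_nonneg_right (mul_nonneg (by positivity) (sub_nonneg.2 hmv))
  rw [hup x₂ ⟨hx₁₂, le_rfl⟩, hdown x₁ ⟨hx₀₁, le_rfl⟩, hx₂, hx₁]
  field_simp
  ring

lemma tsum_mul_sub_min_eq_sum_range {α : Type*} [LinearOrder α] {θ : ℕ → α} (hθ : Monotone θ)
    (s : ℕ → ℝ) (g : α → ℝ) (n : ℕ) :
    ∑' k, s k * (g (min (θ (k + 1)) (θ n)) - g (min (θ k) (θ n))) =
      ∑ k ∈ Finset.range n, s k * (g (θ (k + 1)) - g (θ k)) := by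
  rw [tsum_eq_sum (s := Finset.range n)]
  · refine Finset.sum_congr rfl fun k hk => ?_
    have hk : k < n := Finset.mem_range.1 hk
    rw [min_eq_left (hθ hk), min_eq_left (hθ hk.le)]
  · intro k hk
    have hk : n ≤ k := by simpa using hk
    rw [min_eq_right (hθ (hk.trans k.le_succ)), min_eq_right (hθ hk), sub_self, mul_zero]

theorem stmt18_general {Ω : Type} [MeasurableSpace Ω] (P : Measure Ω)
    (l : ℝ) (hl : 0 < l)
    (B : ℝ → Ω → ℝ) (hB : IsStdBM P B)
    -- the `G k` are i.i.d. exponential with rate `l/2`, independent of `B`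
    (G : ℕ → Ω → ℝ)
    (hGmeas : ∀ k, Measurable (G k))
    (hGdist : ∀ k, P.map (G k) = expMeasure (l / 2))
    -- `θ k = G 0 + ⋯ + G (k-1)`, and `M k` is the minimum of `B` on `[θ k, θ (k+1)]`
    (θ : ℕ → Ω → ℝ) (hθ : ∀ k ω, θ k ω = ∑ i ∈ Finset.range k, G i ω)
    (M : ℕ → Ω → ℝ)
    (hM : ∀ k ω, M k ω = sInf ((fun s => B s ω) '' Set.Icc (θ k ω) (θ (k + 1) ω)))
    -- the switching epochs `ξ` of the flip-flop: `ξ 0 = 0`,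
    -- `ξ (2k+1) − ξ (2k) = λ^{−1/2}(C_k − M_k)`, `ξ (2k+2) − ξ (2k+1) = λ^{−1/2}(C_{k+1} − M_k)`,
    -- where `C k = B (θ k)`; and `χ k = ξ (2k)`
    (ξ : ℕ → Ω → ℝ)
    (hξodd : ∀ k ω, ξ (2 * k + 1) ω = ξ (2 * k) ω + (Real.sqrt l)⁻¹ * (B (θ k ω) ω - M k ω))
    (hξeven : ∀ k ω,
      ξ (2 * k + 2) ω = ξ (2 * k + 1) ω + (Real.sqrt l)⁻¹ * (B (θ (k + 1) ω) ω - M k ω))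
    (χ : ℕ → Ω → ℝ) (hχ : ∀ k ω, χ k ω = ξ (2 * k) ω)
    -- the flip-flop path `F ω`: starts at `0`, has slope `−√l` on `[ξ (2k), ξ (2k+1)]` and
    -- slope `+√l` on `[ξ (2k+1), ξ (2k+2)]`
    (F : Ω → ℝ → ℝ)
    (hFdown : ∀ k ω, ∀ t ∈ Set.Icc (ξ (2 * k) ω) (ξ (2 * k + 1) ω),
      F ω t = F ω (ξ (2 * k) ω) - Real.sqrt l * (t - ξ (2 * k) ω))
    (hFup : ∀ k ω, ∀ t ∈ Set.Icc (ξ (2 * k + 1) ω) (ξ (2 * k + 2) ω),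
      F ω t = F ω (ξ (2 * k + 1) ω) + Real.sqrt l * (t - ξ (2 * k + 1) ω))
    -- `Z` is an arbitrary `{0,1}`-valued sequence of random variables and
    -- `B*(t) = Σ_k (−1)^{Z k} (B(θ (k+1) ∧ t) − B(θ k ∧ t))`
    (Z : ℕ → Ω → ℕ)
    (Bstar : ℝ → Ω → ℝ)
    (hBstar : ∀ t ω, Bstar t ω =
      ∑' k : ℕ, (-1 : ℝ) ^ (Z k ω) * (B (min (θ (k + 1) ω) t) ω - B (min (θ k ω) t) ω)) :
    ∀ᵐ ω ∂P, ∀ k : ℕ, 1 ≤ k →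
      ∑ i ∈ Finset.range k,
          (-1 : ℝ) ^ (Z i ω) * (F ω (χ (i + 1) ω) - F ω (χ i ω)) =
        Bstar (θ k ω) ω := by
  have hG : ∀ᵐ ω ∂P, ∀ i, 0 ≤ G i ω := ae_all_iff.2 fun i =>
    ae_nonneg_of_map_eq_gammaMeasure (hGmeas i).aemeasurable (hGdist i)
  filter_upwards [hG] with ω hω k _
  have hθmono : Monotone fun j => θ j ω := by
    simpa only [hθ] using monotone_sum_range_of_nonneg hω
  have hM_le : ∀ i j, i ≤ j → j ≤ i + 1 → M i ω ≤ B (θ j ω) ω := fun i j hij hji => by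
    rw [hM]
    exact sInf_image_Icc_le (hB.2.2.1 ω) ⟨hθmono hij, hθmono hji⟩
  have hstop := tsum_mul_sub_min_eq_sum_range hθmono (fun i => (-1 : ℝ) ^ Z i ω) (B · ω) k
  rw [hBstar, hstop]
  refine Finset.sum_congr rfl fun i _ => ?_
  rw [hχ, hχ, show 2 * (i + 1) = 2 * i + 2 by ring,
    sub_eq_of_down_up (sqrt_pos.2 hl) (hM_le i i le_rfl i.le_succ)
      (hM_le i (i + 1) i.le_succ le_rfl) (hξodd i ω) (hξeven i ω) (hFdown i ω) (hFup i ω)]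

/-- with `(Z_k)` arbitrary `{0,1}`-valued random variables and
`B*(t) = Σ_k (−1)^{Z_k}(B(θ_{k+1} ∧ t) − B(θ_k ∧ t))`, almost surely, for every `k ≥ 1`,
`Σ_{i=1}^{k} (−1)^{Z_{i−1}} (F_λ(χ_i) − F_λ(χ_{i−1})) = B*(θ_k)`. -/
theorem stmt18 {Ω : Type} [MeasurableSpace Ω] (P : Measure Ω) [IsProbabilityMeasure P]
    (l : ℝ) (hl : 0 < l)
    (B : ℝ → Ω → ℝ) (hB : IsStdBM P B)
    -- the `G k` are i.i.d. exponential with rate `l/2`, independent of `B`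
    (G : ℕ → Ω → ℝ)
    (hGmeas : ∀ k, Measurable (G k))
    (hGdist : ∀ k, P.map (G k) = expMeasure (l / 2))
    (hGindep : iIndepFun G P)
    (hBGindep : Indep (⨆ t : ℝ, MeasurableSpace.comap (B t) inferInstance)
      (⨆ k : ℕ, MeasurableSpace.comap (G k) inferInstance) P)
    -- `θ k = G 0 + ⋯ + G (k-1)`, and `M k` is the minimum of `B` on `[θ k, θ (k+1)]`
    (θ : ℕ → Ω → ℝ) (hθ : ∀ k ω, θ k ω = ∑ i ∈ Finset.range k, G i ω)
    (M : ℕ → Ω → ℝ)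
    (hM : ∀ k ω, M k ω = sInf ((fun s => B s ω) '' Set.Icc (θ k ω) (θ (k + 1) ω)))
    -- the switching epochs `ξ` of the flip-flop: `ξ 0 = 0`,
    -- `ξ (2k+1) − ξ (2k) = λ^{−1/2}(C_k − M_k)`, `ξ (2k+2) − ξ (2k+1) = λ^{−1/2}(C_{k+1} − M_k)`,
    -- where `C k = B (θ k)`; and `χ k = ξ (2k)`
    (ξ : ℕ → Ω → ℝ)
    (hξ0 : ∀ ω, ξ 0 ω = 0)
    (hξodd : ∀ k ω, ξ (2 * k + 1) ω = ξ (2 * k) ω + (Real.sqrt l)⁻¹ * (B (θ k ω) ω - M k ω))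
    (hξeven : ∀ k ω,
      ξ (2 * k + 2) ω = ξ (2 * k + 1) ω + (Real.sqrt l)⁻¹ * (B (θ (k + 1) ω) ω - M k ω))
    (χ : ℕ → Ω → ℝ) (hχ : ∀ k ω, χ k ω = ξ (2 * k) ω)
    -- the flip-flop path `F ω`: starts at `0`, has slope `−√l` on `[ξ (2k), ξ (2k+1)]` and
    -- slope `+√l` on `[ξ (2k+1), ξ (2k+2)]`
    (F : Ω → ℝ → ℝ)
    (hF0 : ∀ ω, F ω 0 = 0)
    (hFdown : ∀ k ω, ∀ t ∈ Set.Icc (ξ (2 * k) ω) (ξ (2 * k + 1) ω),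
      F ω t = F ω (ξ (2 * k) ω) - Real.sqrt l * (t - ξ (2 * k) ω))
    (hFup : ∀ k ω, ∀ t ∈ Set.Icc (ξ (2 * k + 1) ω) (ξ (2 * k + 2) ω),
      F ω t = F ω (ξ (2 * k + 1) ω) + Real.sqrt l * (t - ξ (2 * k + 1) ω))
    -- `Z` is an arbitrary `{0,1}`-valued sequence of random variables and
    -- `B*(t) = Σ_k (−1)^{Z k} (B(θ (k+1) ∧ t) − B(θ k ∧ t))`
    (Z : ℕ → Ω → ℕ) (hZval : ∀ k ω, Z k ω = 0 ∨ Z k ω = 1)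
    (Bstar : ℝ → Ω → ℝ)
    (hBstar : ∀ t ω, Bstar t ω =
      ∑' k : ℕ, (-1 : ℝ) ^ (Z k ω) * (B (min (θ (k + 1) ω) t) ω - B (min (θ k ω) t) ω)) :
    ∀ᵐ ω ∂P, ∀ k : ℕ, 1 ≤ k →
      ∑ i ∈ Finset.range k,
          (-1 : ℝ) ^ (Z i ω) * (F ω (χ (i + 1) ω) - F ω (χ i ω)) =
        Bstar (θ k ω) ω :=
  stmt18_general P l hl B hB G hGmeas hGdist θ hθ M hM ξ hξodd hξeven χ hχ F hFdown hFup Z Bstar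
    hBstar
end
end
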